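/- If G is a periodic group that is either abelian or a hamiltonian 2-group, then S_*(ZG) is a subgroup of U(ZG). -/

import Mathlib

/-- The canonical involution on the group ring `K[G]`, sending `∑ a_g g` to `∑ a_g g⁻¹`. -/
noncomputable def gstar {K G : Type*} [CommRing K] [Group G] (x : MonoidAlgebra K G) :
    MonoidAlgebra K G := MonoidAlgebra.ofCoeff (Finsupp.mapDomain (fun g => g⁻¹) x.coeff)

/-!
In a group whose subgroups are all normal, the commutator `c = ⁅a, b⁆` lies in `⟨a⟩ ⊓ ⟨b⟩`, so it
commutes with `a` and `b`. For a 2-group this gives, by strong induction on `|a| + |b|`, that a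
non-commuting pair has `a ^ 4 = 1`, hence `c = a ^ 2`: if `c ^ 2 ≠ 1` then `(b, a ^ 2)` is a
smaller non-commuting pair, and if `c ^ 2 = 1`, `|b| ≤ |a|` but `a ^ 4 ≠ 1` then so is
`(a, a ^ 2 ^ δ * b)` for `|a| = 2 ^ δ * |b|`. Hence every conjugate of `g` is `g` or `g⁻¹`, as it
trivially is in an abelian group. Then the coefficients of a symmetric element of `K[G]` are
constant on conjugacy classes, so it is central; thus `(uv)* = v*u* = vu = uv` for symmetric units
`u, v`, and the symmetric units form a subgroup.
-/

open Subgroup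
open scoped commutatorElement

section Dedekind

variable {G : Type*} [Group G]

theorem commute_of_mem_zpowers {a x : G} (hx : x ∈ zpowers a) : Commute a x := by
  obtain ⟨k, rfl⟩ := mem_zpowers_iff.mp hx
  exact (Commute.refl a).zpow_right k

theorem commutatorElement_mem_zpowers_inf (hn : ∀ H : Subgroup G, H.Normal) (a b : G) :
    ⁅a, b⁆ ∈ zpowers a ⊓ zpowers b :=
  haveI := hn (zpowers a)
  haveI := hn (zpowers b)
  commutator_le_inf _ _ (commutator_mem_commutator (mem_zpowers a) (mem_zpowers b))

theorem commutatorElement_pow_left {a b : G} (h : Commute a ⁅a, b⁆) (n : ℕ) :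
    ⁅a ^ n, b⁆ = ⁅a, b⁆ ^ n := by
  induction n with
  | zero => simp
  | succ n ih =>
    calc ⁅a ^ (n + 1), b⁆ = a * ⁅a ^ n, b⁆ * (b * a⁻¹ * b⁻¹) := by
          simp only [commutatorElement_def]; group
      _ = ⁅a, b⁆ ^ n * ⁅a, b⁆ := by
          rw [ih, (h.pow_right n).eq, commutatorElement_def a b]; group
      _ = ⁅a, b⁆ ^ (n + 1) := (pow_succ _ _).symm

theorem mul_pow_two_pow_of_commutatorElement_sq {x y : G} (hx : Commute x ⁅x, y⁆)
    (hy : Commute y ⁅x, y⁆) (hsq : ⁅x, y⁆ ^ 2 = 1) (k : ℕ) :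
    (x * y) ^ 2 ^ (k + 1) = ⁅x, y⁆ ^ 2 ^ k * (x ^ 2 ^ (k + 1) * y ^ 2 ^ (k + 1)) := by
  have hx2y : Commute (x ^ 2) y := commutatorElement_eq_one_iff_commute.mp
    (by rw [commutatorElement_pow_left hx, hsq])
  have hxy : x * y = ⁅x, y⁆ * (y * x) := by rw [commutatorElement_def]; group
  have hxy2 : (x * y) ^ 2 = ⁅x, y⁆ * (x ^ 2 * y ^ 2) := by
    calc (x * y) ^ 2 = ⁅x, y⁆ * (y * x ^ 2 * y) := by
          rw [pow_two, pow_two]; nth_rewrite 1 [hxy]; group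
      _ = ⁅x, y⁆ * (x ^ 2 * y ^ 2) := by rw [← hx2y.eq, pow_two y, mul_assoc]
  have hd : Commute ⁅x, y⁆ (x ^ 2 * y ^ 2) :=
    (hx.symm.pow_right 2).mul_right (hy.symm.pow_right 2)
  rw [pow_succ', pow_mul, pow_mul, pow_mul, hxy2, hd.mul_pow, (hx2y.pow_right 2).mul_pow]

theorem eq_one_or_eq_sq_of_mem_zpowers {a b c : G} (ha : a ^ 4 = 1) (hc : c ∈ zpowers a)
    (hcb : Commute c b) (hab : ¬Commute a b) : c = 1 ∨ c = a ^ 2 := by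
  classical
  have hfin : IsOfFinOrder a := isOfFinOrder_iff_pow_eq_one.mpr ⟨4, by norm_num, ha⟩
  obtain ⟨k, hk, rfl⟩ := Finset.mem_image.mp (hfin.mem_zpowers_iff_mem_range_orderOf.mp hc)
  have hk4 : k < 4 :=
    (Finset.mem_range.mp hk).trans_le (orderOf_le_of_pow_eq_one (by norm_num) ha)
  interval_cases k
  · exact Or.inl (pow_zero a)
  · exact absurd (by simpa using hcb) hab
  · exact Or.inr rfl
  · refine absurd ?_ hab
    have : (a ^ 3) ^ 3 = a := by
      rw [← pow_mul, show 3 * 3 = 4 * 2 + 1 by rfl, pow_add, pow_mul, ha, one_pow, one_mul, pow_one]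
    simpa only [this] using hcb.pow_left 3

theorem conj_eq_inv_of_pow_four_eq_one (hn : ∀ H : Subgroup G, H.Normal) {a b : G}
    (ha : a ^ 4 = 1) (hab : ¬Commute a b) : b * a * b⁻¹ = a⁻¹ := by
  obtain ⟨hca, hcb⟩ := commutatorElement_mem_zpowers_inf hn a b
  rcases eq_one_or_eq_sq_of_mem_zpowers ha hca (commute_of_mem_zpowers hcb).symm hab with h | h
  · exact absurd (commutatorElement_eq_one_iff_commute.mp h) hab
  · rw [commutatorElement_def, pow_two, mul_assoc, mul_assoc, mul_right_inj, ← mul_assoc] at h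
    calc b * a * b⁻¹ = (b * a⁻¹ * b⁻¹)⁻¹ := by group
      _ = a⁻¹ := by rw [h]

theorem sq_commutatorElement_eq_one_of_pow_four (hn : ∀ H : Subgroup G, H.Normal) {a b : G}
    (hb : b ^ 4 = 1) : ⁅a, b⁆ ^ 2 = 1 := by
  by_cases hab : Commute b a
  · rw [commutatorElement_eq_one_iff_commute.mpr hab.symm, one_pow]
  obtain ⟨hca, hcb⟩ := commutatorElement_mem_zpowers_inf hn a b
  rcases eq_one_or_eq_sq_of_mem_zpowers hb hcb (commute_of_mem_zpowers hca).symm hab with h | h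
  · rw [h, one_pow]
  · rw [h, ← pow_mul, hb]

end Dedekind

section TwoGroup

variable {G : Type*} [Group G]

theorem pow_four_eq_one_iff_orderOf_le (h2 : IsPGroup 2 G) (a : G) :
    a ^ 4 = 1 ↔ orderOf a ≤ 4 := by
  refine ⟨orderOf_le_of_pow_eq_one (by norm_num), fun h => ?_⟩
  obtain ⟨k, hk⟩ := IsPGroup.iff_orderOf.mp h2 a
  rw [hk, show 4 = 2 ^ 2 by rfl, Nat.pow_le_pow_iff_right (by norm_num)] at h
  rw [← orderOf_dvd_iff_pow_eq_one, hk]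
  exact Nat.pow_dvd_pow 2 h

theorem orderOf_lt_of_pow_two_pow_eq_one {x y : G} {m : ℕ} (hx : orderOf x = 2 ^ (m + 1))
    (hy : y ^ 2 ^ m = 1) : orderOf y < orderOf x :=
  hx ▸ (orderOf_le_of_pow_eq_one (by positivity) hy).trans_lt
    (Nat.pow_lt_pow_right one_lt_two m.lt_succ_self)

theorem eq_pow_two_pow_of_mem_zpowers {a c : G} {m : ℕ} (ha : orderOf a = 2 ^ (m + 1))
    (hc : c ∈ zpowers a) (hc1 : c ≠ 1) (hc2 : c ^ 2 = 1) : c = a ^ 2 ^ m := by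
  classical
  have hfin : IsOfFinOrder a := orderOf_pos_iff.mp (by rw [ha]; positivity)
  obtain ⟨k, hk, rfl⟩ := Finset.mem_image.mp (hfin.mem_zpowers_iff_mem_range_orderOf.mp hc)
  rw [Finset.mem_range, ha, pow_succ] at hk
  have hdvd : 2 ^ m * 2 ∣ k * 2 := by
    rw [← pow_succ, ← ha]
    exact orderOf_dvd_of_pow_eq_one (by rw [pow_mul, hc2])
  obtain ⟨q, rfl⟩ := Nat.dvd_of_mul_dvd_mul_right two_pos hdvd
  have hq : q < 2 := Nat.lt_of_mul_lt_mul_left hk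
  interval_cases q
  · simp at hc1
  · rw [mul_one]

theorem exists_not_commute_orderOf_lt (hn : ∀ H : Subgroup G, H.Normal) (h2 : IsPGroup 2 G)
    {a b : G} (hab : ¬Commute a b) (hc2 : ⁅a, b⁆ ^ 2 = 1) (hba : orderOf b ≤ orderOf a)
    (ha : a ^ 4 ≠ 1) : ∃ u, ¬Commute a u ∧ orderOf u < orderOf b := by
  obtain ⟨hca, hcb⟩ := commutatorElement_mem_zpowers_inf hn a b
  have hac := commute_of_mem_zpowers hca
  have hbc := commute_of_mem_zpowers hcb
  have hc1 : ⁅a, b⁆ ≠ 1 := mt commutatorElement_eq_one_iff_commute.mp hab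
  obtain ⟨α, hα⟩ := IsPGroup.iff_orderOf.mp h2 a
  obtain ⟨β, hβ⟩ := IsPGroup.iff_orderOf.mp h2 b
  rcases β with _ | _ | β
  · exact absurd (Commute.one_right a) (by rwa [← orderOf_eq_one_iff.mp hβ])
  · have hcb' : ⁅a, b⁆ = b := by simpa using eq_pow_two_pow_of_mem_zpowers hβ hcb hc1 hc2
    exact absurd (hcb' ▸ hac) hab
  obtain ⟨δ, rfl⟩ := Nat.exists_eq_add_of_le
    ((Nat.pow_le_pow_iff_right (by norm_num)).mp (hα ▸ hβ ▸ hba))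
  have hδ : 1 ≤ β + δ := by
    by_contra h
    obtain ⟨rfl, rfl⟩ : β = 0 ∧ δ = 0 := by omega
    exact ha ((pow_four_eq_one_iff_orderOf_le h2 a).mpr hα.le)
  have hcα : ⁅a, b⁆ = a ^ 2 ^ (β + δ + 1) :=
    eq_pow_two_pow_of_mem_zpowers (by rw [hα]; ring_nf) hca hc1 hc2
  have hcβ : ⁅a, b⁆ = b ^ 2 ^ (β + 1) := eq_pow_two_pow_of_mem_zpowers hβ hcb hc1 hc2
  have hcomm : ⁅a ^ 2 ^ δ, b⁆ = ⁅a, b⁆ ^ 2 ^ δ := commutatorElement_pow_left hac _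
  -- `⁅a, b⁆` is the involution of both `⟨a⟩` and `⟨b⟩`, so in `(a ^ 2 ^ δ * b) ^ 2 ^ (β + 1)`
  -- the two pure powers cancel, and the correction term is an even power of `⁅a, b⁆`.
  refine ⟨a ^ 2 ^ δ * b, fun h => hab ?_, orderOf_lt_of_pow_two_pow_eq_one hβ ?_⟩
  · simpa using ((Commute.refl a).pow_right (2 ^ δ)).inv_right.mul_right h
  · rw [mul_pow_two_pow_of_commutatorElement_sq (hcomm ▸ hac.pow_pow _ _)
      (hcomm ▸ hbc.pow_right _) (by rw [hcomm, ← pow_mul, mul_comm, pow_mul, hc2, one_pow]),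
      hcomm, ← pow_mul, ← pow_mul, ← pow_add, ← pow_add, ← hcβ,
      show δ + (β + 1) = β + δ + 1 by omega, ← hcα]
    obtain ⟨k, hk⟩ : ∃ k, δ + β = k + 1 := ⟨δ + β - 1, by omega⟩
    rw [hk, pow_succ', pow_mul, hc2, one_pow, one_mul, ← pow_two, hc2]

theorem pow_four_eq_one_of_not_commute (hn : ∀ H : Subgroup G, H.Normal) (h2 : IsPGroup 2 G)
    {a b : G} (hab : ¬Commute a b) : a ^ 4 = 1 := by
  induction hsum : orderOf a + orderOf b using Nat.strong_induction_on generalizing a b with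
  | _ n ih =>
  subst hsum
  -- Otherwise `(b, a ^ 2)` is a smaller non-commuting pair, and then `b ^ 4 = 1`
  -- forces `⁅a, b⁆ ^ 2 = 1`.
  have hc2 : ⁅a, b⁆ ^ 2 = 1 := by
    by_contra hc2
    obtain ⟨α, hα⟩ := IsPGroup.iff_orderOf.mp h2 a
    rcases α with _ | α
    · exact absurd (Commute.one_left b) (by rwa [← orderOf_eq_one_iff.mp hα])
    have hlt : orderOf (a ^ 2) < orderOf a := orderOf_lt_of_pow_two_pow_eq_one hα
      (by rw [← pow_mul, ← pow_succ', ← hα, pow_orderOf_eq_one])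
    have hba2 : ¬Commute b (a ^ 2) := fun h => hc2 <| by
      rw [← commutatorElement_pow_left (commute_of_mem_zpowers
        (commutatorElement_mem_zpowers_inf hn a b).1),
        commutatorElement_eq_one_iff_commute.mpr h.symm]
    exact hc2 (sq_commutatorElement_eq_one_of_pow_four hn (ih _ (by omega) hba2 rfl))
  rcases le_or_gt (orderOf b) (orderOf a) with hle | hlt
  · by_contra ha
    obtain ⟨u, hau, hu⟩ := exists_not_commute_orderOf_lt hn h2 hab hc2 hle ha
    exact ha (ih _ (by omega) hau rfl)
  · by_contra ha
    have hb : b ^ 4 ≠ 1 := fun hb => ha <| (pow_four_eq_one_iff_orderOf_le h2 a).mpr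
      (hlt.le.trans ((pow_four_eq_one_iff_orderOf_le h2 b).mp hb))
    obtain ⟨u, hbu, hu⟩ := exists_not_commute_orderOf_lt hn h2 (fun h => hab h.symm)
      (by rw [← commutatorElement_inv, inv_pow, hc2, inv_one]) hlt.le hb
    exact hb (ih _ (by omega) hbu rfl)

theorem conj_eq_self_or_inv (hn : ∀ H : Subgroup G, H.Normal) (h2 : IsPGroup 2 G) (g h : G) :
    h * g * h⁻¹ = g ∨ h * g * h⁻¹ = g⁻¹ := by
  by_cases hgh : Commute g h
  · exact Or.inl (by rw [hgh.symm.eq, mul_inv_cancel_right])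
  · exact Or.inr (conj_eq_inv_of_pow_four_eq_one hn (pow_four_eq_one_of_not_commute hn h2 hgh) hgh)

end TwoGroup

namespace MonoidAlgebra

theorem commute_of_coeff_conj {K G : Type*} [CommSemiring K] [Group G] {x : MonoidAlgebra K G}
    (hx : ∀ g h : G, x.coeff (h * g * h⁻¹) = x.coeff g) (y : MonoidAlgebra K G) :
    Commute x y := by
  induction y using induction_linear with
  | zero => exact Commute.zero_right x
  | add y y' hy hy' => exact hy.add_right hy'
  | single h r =>
    ext k
    rw [coeff_mul_single_apply, coeff_single_mul_apply, mul_comm, ← hx (h⁻¹ * k) h,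
      mul_inv_cancel_left]

end MonoidAlgebra

section gstar

open MonoidAlgebra

variable {K G : Type*} [CommRing K] [Group G]

theorem gstar_zero : gstar (0 : MonoidAlgebra K G) = 0 :=
  mapDomain_zero _

theorem gstar_add (x y : MonoidAlgebra K G) : gstar (x + y) = gstar x + gstar y :=
  mapDomain_add _ x y

theorem gstar_single (g : G) (r : K) : gstar (single g r) = single g⁻¹ r :=
  mapDomain_single

theorem coeff_gstar_inv (x : MonoidAlgebra K G) (g : G) : (gstar x).coeff g⁻¹ = x.coeff g :=
  Finsupp.mapDomain_apply inv_injective _ _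

theorem gstar_one : gstar (1 : MonoidAlgebra K G) = 1 := by
  rw [one_def, gstar_single, inv_one]

theorem gstar_mul (x y : MonoidAlgebra K G) : gstar (x * y) = gstar y * gstar x := by
  induction x using induction_linear with
  | zero => rw [zero_mul, gstar_zero, mul_zero]
  | add x x' hx hx' => rw [add_mul, gstar_add, gstar_add, hx, hx', mul_add]
  | single g r =>
    induction y using induction_linear with
    | zero => rw [mul_zero, gstar_zero, zero_mul]
    | add y y' hy hy' => rw [mul_add, gstar_add, gstar_add, hy, hy', add_mul]
    | single h s =>
      rw [single_mul_single, gstar_single, gstar_single, gstar_single, single_mul_single,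
        mul_inv_rev, mul_comm r]

theorem commute_of_gstar_eq_self (hG : ∀ g h : G, h * g * h⁻¹ = g ∨ h * g * h⁻¹ = g⁻¹)
    {x : MonoidAlgebra K G} (hx : gstar x = x) (y : MonoidAlgebra K G) : Commute x y :=
  commute_of_coeff_conj (fun g h => by
    rcases hG g h with hc | hc <;> rw [hc]
    simpa [hx] using coeff_gstar_inv x g) y

def symmetricUnits
    (hcomm : ∀ x y : MonoidAlgebra K G, gstar x = x → gstar y = y → Commute x y) :
    Subgroup (MonoidAlgebra K G)ˣ where
  carrier := {u | gstar (u : MonoidAlgebra K G) = u}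
  one_mem' := gstar_one
  mul_mem' {u v} (hu : gstar (u : MonoidAlgebra K G) = u)
      (hv : gstar (v : MonoidAlgebra K G) = v) := by
    change gstar (u * v : MonoidAlgebra K G) = u * v
    rw [gstar_mul, hu, hv]
    exact (hcomm _ _ hv hu).eq
  inv_mem' {u} (hu : gstar (u : MonoidAlgebra K G) = u) := by
    change gstar _ = _
    rw [← Units.mul_eq_one_iff_eq_inv, ← hu, ← gstar_mul, Units.mul_inv, gstar_one]

end gstar

theorem stmt_14_general {G : Type*} [Group G]
    (h : (∀ a b : G, a * b = b * a) ∨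
      ((¬ ∀ a b : G, a * b = b * a) ∧ (∀ g : G, ∃ m : ℕ, g ^ (2 ^ m) = 1) ∧
        ∀ H : Subgroup G, H.Normal)) :
    ∃ S : Subgroup (MonoidAlgebra ℤ G)ˣ,
      ∀ u : (MonoidAlgebra ℤ G)ˣ, u ∈ S ↔ gstar (u : MonoidAlgebra ℤ G) = u := by
  have hconj : ∀ g h : G, h * g * h⁻¹ = g ∨ h * g * h⁻¹ = g⁻¹ := by
    rcases h with hab | ⟨-, h2, hn⟩
    · exact fun g h => Or.inl (by rw [hab h g, mul_inv_cancel_right])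
    · exact conj_eq_self_or_inv hn h2
  exact ⟨symmetricUnits fun x y hx _ => commute_of_gstar_eq_self hconj hx y, fun _ => Iff.rfl⟩

/-- If G is periodic and either abelian or a hamiltonian 2-group, then the symmetric
units of ℤG form a subgroup of U(ℤG). -/
theorem stmt_14 {G : Type*} [Group G] (hper : ∀ g : G, IsOfFinOrder g)
    (h : (∀ a b : G, a * b = b * a) ∨
      ((¬ ∀ a b : G, a * b = b * a) ∧ (∀ g : G, ∃ m : ℕ, g ^ (2 ^ m) = 1) ∧
        ∀ H : Subgroup G, H.Normal)) :
    ∃ S : Subgroup (MonoidAlgebra ℤ G)ˣ,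
      ∀ u : (MonoidAlgebra ℤ G)ˣ, u ∈ S ↔ gstar (u : MonoidAlgebra ℤ G) = u :=
  stmt_14_general h
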